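/- arXiv:1412.8083 — 3 statements merged into one kernel-verified Lean document; each statement's English description precedes it below -/
import Mathlib

section
/- Let H be a 3-uniform hypergraph containing no Berge cycle of length 3 (i.e., no three distinct hyperedges H₀,H₁,H₂ and distinct vertices v₀,v₁,v₂ with {v₀,v₁}⊆H₀, {v₁,v₂}⊆H₁, {v₂,v₀}⊆H₂). Then the graph on the vertex set of H whose edges are pairs contained in at least two hyperedges of H is triangle-free. -/
/-- The hypergraph `H` contains a Berge cycle of length `ℓ`. -/
def HasBergeCycle {V : Type*} (H : Finset (Finset V)) (ℓ : ℕ) : Prop :=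
  ∃ (f : Fin ℓ → Finset V) (v : Fin ℓ → V),
    Function.Injective f ∧ Function.Injective v ∧
    (∀ i, f i ∈ H) ∧ ∀ i : Fin ℓ, v i ∈ f i ∧ v ⟨(↑i + 1) % ℓ, Nat.mod_lt _ i.pos⟩ ∈ f i

/-- The codegree of the pair `{u, v}` in the hypergraph `H`. -/
def codeg {V : Type*} [DecidableEq V] (H : Finset (Finset V)) (u v : V) : ℕ :=
  (H.filter fun E => ({u, v} : Finset V) ⊆ E).card

/-- The graph on the vertex set of `H` whose edges are the pairs covered at least twice. -/
def shadowGraph {V : Type*} [DecidableEq V] (H : Finset (Finset V)) : SimpleGraph V where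
  Adj u v := u ≠ v ∧ 2 ≤ codeg H u v
  symm := by
    constructor
    rintro u v ⟨h1, h2⟩
    refine ⟨h1.symm, ?_⟩
    rwa [codeg, Finset.pair_comm v u]
  loopless := ⟨fun v h => h.1 rfl⟩

/-! In a 3-uniform hypergraph a triangle `abc` of the shadow graph is covered by at most one
hyperedge, namely `{a, b, c}`. Since each side `xy` lies in two hyperedges, it lies in one other
than `{a, b, c}`, which then misses the third vertex. These three hyperedges are pairwise
distinct, as each contains a vertex another one misses, so they form a Berge triangle. -/

theorem codeg_comm {V : Type*} [DecidableEq V] (H : Finset (Finset V)) (u v : V) :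
    codeg H u v = codeg H v u := by
  rw [codeg, codeg, Finset.pair_comm]

theorem exists_mem_ne_of_two_le_codeg {V : Type*} [DecidableEq V] {H : Finset (Finset V)}
    {u v : V} (h : 2 ≤ codeg H u v) (F : Finset V) : ∃ E ∈ H, u ∈ E ∧ v ∈ E ∧ E ≠ F := by
  obtain ⟨E, hE, hEF⟩ := Finset.exists_mem_ne (Nat.lt_of_succ_le h) F
  rw [Finset.mem_filter, Finset.insert_subset_iff, Finset.singleton_subset_iff] at hE
  exact ⟨E, hE.1, hE.2.1, hE.2.2, hEF⟩

theorem notMem_of_card_le_three {V : Type*} [DecidableEq V] {E : Finset V} {a b c : V}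
    (hE : E.card ≤ 3) (hab : a ≠ b) (hac : a ≠ c) (hbc : b ≠ c) (ha : a ∈ E) (hb : b ∈ E)
    (hne : E ≠ {a, b, c}) : c ∉ E := by
  intro hc
  have hsub : ({a, b, c} : Finset V) ⊆ E := by
    simp only [Finset.insert_subset_iff, Finset.singleton_subset_iff]
    exact ⟨ha, hb, hc⟩
  have hcard : ({a, b, c} : Finset V).card = 3 :=
    Finset.card_eq_three.mpr ⟨a, b, c, hab, hac, hbc, rfl⟩
  exact hne (Finset.eq_of_subset_of_card_le hsub (hcard ▸ hE)).symm

theorem hasBergeCycle_three {V : Type*} {H : Finset (Finset V)} {E₀ E₁ E₂ : Finset V} {a b c : V}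
    (h₀ : E₀ ∈ H) (h₁ : E₁ ∈ H) (h₂ : E₂ ∈ H) (h₀₁ : E₀ ≠ E₁) (h₀₂ : E₀ ≠ E₂) (h₁₂ : E₁ ≠ E₂)
    (hab : a ≠ b) (hac : a ≠ c) (hbc : b ≠ c) (ha₀ : a ∈ E₀) (hb₀ : b ∈ E₀) (hb₁ : b ∈ E₁)
    (hc₁ : c ∈ E₁) (hc₂ : c ∈ E₂) (ha₂ : a ∈ E₂) : HasBergeCycle H 3 := by
  refine ⟨![E₀, E₁, E₂], ![a, b, c], ?_, ?_, ?_, ?_⟩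
  · intro i j
    fin_cases i <;> fin_cases j <;> simp [h₀₁, h₀₂, h₁₂, h₀₁.symm, h₀₂.symm, h₁₂.symm]
  · intro i j
    fin_cases i <;> fin_cases j <;> simp [hab, hac, hbc, hab.symm, hac.symm, hbc.symm]
  · intro i
    fin_cases i <;> assumption
  · intro i
    fin_cases i <;> exact ⟨‹_›, ‹_›⟩

/-- If the 3-uniform hypergraph `H` has no Berge cycle of length `3`, then the graph of
pairs covered at least twice is triangle-free. -/
theorem stmt5 {V : Type*} [DecidableEq V] (H : Finset (Finset V))
    (h3 : ∀ E ∈ H, E.card = 3) (hB : ¬ HasBergeCycle H 3) :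
    (shadowGraph H).CliqueFree 3 := by
  intro t ht
  obtain ⟨a, b, c, ⟨hab, hab₂⟩, ⟨hac, hac₂⟩, ⟨hbc, hbc₂⟩, -⟩ := SimpleGraph.is3Clique_iff.mp ht
  rw [codeg_comm] at hac₂
  obtain ⟨E₀, h₀, ha₀, hb₀, hne₀⟩ := exists_mem_ne_of_two_le_codeg hab₂ {a, b, c}
  obtain ⟨E₁, h₁, hb₁, hc₁, hne₁⟩ := exists_mem_ne_of_two_le_codeg hbc₂ {a, b, c}
  obtain ⟨E₂, h₂, hc₂, ha₂, hne₂⟩ := exists_mem_ne_of_two_le_codeg hac₂ {a, b, c}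
  have hc₀ : c ∉ E₀ := notMem_of_card_le_three (h3 E₀ h₀).le hab hac hbc ha₀ hb₀ hne₀
  have ha₁ : a ∉ E₁ := notMem_of_card_le_three (h3 E₁ h₁).le hbc hab.symm hac.symm hb₁ hc₁
    (by rwa [Finset.pair_comm c a, Finset.insert_comm b a])
  have hb₂ : b ∉ E₂ := notMem_of_card_le_three (h3 E₂ h₂).le hac.symm hbc.symm hab hc₂ ha₂
    (by rwa [Finset.insert_comm c a, Finset.pair_comm c b])
  exact hB <| hasBergeCycle_three h₀ h₁ h₂ (fun h => hc₀ (h ▸ hc₁)) (fun h => hc₀ (h ▸ hc₂))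
    (fun h => ha₁ (h ▸ ha₂)) hab hac hbc ha₀ hb₀ hb₁ hc₁ hc₂ ha₂
end

section
/- For k ≥ 2, the maximum number of triangles in an n-vertex graph with no cycle of length 2k satisfies t_{2k}(n) ≤ ((2k-3)/3)·ex(n, C_{2k}). -/
/-- `G` contains no cycle of length `ℓ`. -/
def CycleFree {V : Type*} (G : SimpleGraph V) (ℓ : ℕ) : Prop :=
  ∀ (v : V) (c : G.Walk v v), c.IsCycle → c.length ≠ ℓ

/-- The Turán number `ex(n, C_ℓ)`: the maximum number of edges of an `n`-vertex graph
with no cycle of length `ℓ`. -/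
noncomputable def exCycle (n ℓ : ℕ) : ℕ :=
  sSup {m | ∃ G : SimpleGraph (Fin n), CycleFree G ℓ ∧ G.edgeSet.ncard = m}

/-- `t_ℓ(n)`: the maximum number of triangles of an `n`-vertex graph with no cycle of
length `ℓ`. -/
noncomputable def triMax (n ℓ : ℕ) : ℕ :=
  sSup {m | ∃ G : SimpleGraph (Fin n), CycleFree G ℓ ∧ (G.cliqueSet 3).ncard = m}

/-!
The triangles through a vertex `v` correspond to the edges inside its neighbourhood `N(v)`, and
`N(v)` contains no path with `2k - 2` edges, since such a path closes up through `v` to a cycle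
of length `2k`. By the Erdős–Gallai theorem `N(v)` therefore spans at most `(2k - 3) deg v / 2`
edges, and summing over `v` gives `6 t(G) ≤ (2k - 3) · 2 e(G)`.

Erdős–Gallai (a graph on `s` without paths of `q` edges has at most `(q - 1) |s| / 2` edges) is
proved by induction on `s`. If some vertex has degree at most `(q - 1) / 2`, delete it. Otherwise
all degrees are at least `q / 2`, and Pósa's rotation puts the vertices of a longest path on a
cycle; by maximality of the path this cycle is a whole component, with at most `q` vertices, and
it is deleted.
-/

open Finset

namespace SimpleGraph

variable {V : Type*} (G : SimpleGraph V)

structure IsPathIn (s : Finset V) (m : ℕ) (f : ℕ → V) : Prop where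
  mem : ∀ i ≤ m, f i ∈ s
  adj : ∀ i < m, G.Adj (f i) (f (i + 1))
  inj : ∀ i ≤ m, ∀ j ≤ m, f i = f j → i = j

/-- `g 0, g 1, …, g n, g 0` is a closed walk through distinct vertices: a cycle for `n ≥ 2`, but
a single edge traversed back and forth for `n = 1`. -/
structure IsCycleIn (s : Finset V) {n : ℕ} (g : Fin (n + 1) → V) : Prop where
  mem : ∀ r, g r ∈ s
  injective : Function.Injective g
  adj : ∀ r, G.Adj (g r) (g (r + 1))

variable {G} {s : Finset V}

namespace IsPathIn

variable {m : ℕ} {f : ℕ → V}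

lemma mono (hf : G.IsPathIn s m f) {t : Finset V} (hst : s ⊆ t) : G.IsPathIn t m f :=
  ⟨fun i hi => hst (hf.mem i hi), hf.adj, hf.inj⟩

lemma of_le (hf : G.IsPathIn s m f) {l : ℕ} (hl : l ≤ m) : G.IsPathIn s l f :=
  ⟨fun i hi => hf.mem i (hi.trans hl), fun i hi => hf.adj i (hi.trans_le hl),
    fun i hi j hj => hf.inj i (hi.trans hl) j (hj.trans hl)⟩

lemma reverse (hf : G.IsPathIn s m f) : G.IsPathIn s m (fun i => f (m - i)) where
  mem i _ := hf.mem _ (Nat.sub_le m i)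
  adj i hi := by
    simpa [show m - i = m - (i + 1) + 1 by omega] using (hf.adj (m - (i + 1)) (by omega)).symm
  inj i hi j hj hij := by have := hf.inj _ (Nat.sub_le m i) _ (Nat.sub_le m j) hij; omega

lemma cons (hf : G.IsPathIn s m f) {w : V} (hw : w ∈ s) (hadj : G.Adj w (f 0))
    (hnew : ∀ i ≤ m, f i ≠ w) : G.IsPathIn s (m + 1) (fun | 0 => w | i + 1 => f i) where
  mem
    | 0, _ => hw
    | i + 1, hi => hf.mem i (by omega)
  adj
    | 0, _ => hadj
    | i + 1, hi => hf.adj i (by omega)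
  inj
    | 0, _, 0, _, _ => rfl
    | 0, _, j + 1, hj, h => (hnew j (by omega) h.symm).elim
    | i + 1, hi, 0, _, h => (hnew i (by omega) h).elim
    | i + 1, hi, j + 1, hj, h => by rw [hf.inj i (by omega) j (by omega) h]

lemma isCycleIn (hf : G.IsPathIn s m f) (hadj : G.Adj (f m) (f 0)) :
    G.IsCycleIn s (fun r : Fin (m + 1) => f r) where
  mem r := hf.mem r (Fin.is_le r)
  injective a b hab := Fin.ext (hf.inj a (Fin.is_le a) b (Fin.is_le b) hab)
  adj r := by
    rw [Fin.val_add_one]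
    split_ifs with hr
    · simpa [hr] using hadj
    · exact hf.adj r (by have := Fin.val_lt_last hr; omega)

end IsPathIn

namespace IsCycleIn

variable {n : ℕ} {g : Fin (n + 1) → V}

lemma cycleGraph_isContained (hg : G.IsCycleIn s g) : cycleGraph (n + 1) ⊑ G := by
  have key : ∀ a b : Fin (n + 1), (a - b).val = 1 → G.Adj (g a) (g b) := by
    intro a b hab
    have hn : 1 < n + 1 := by have := (a - b).isLt; omega
    rw [show a = b + 1 by
      rw [← sub_eq_iff_eq_add', Fin.ext_iff, hab, Fin.val_one', Nat.mod_eq_of_lt hn]]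
    exact (hg.adj b).symm
  refine ⟨⟨⟨g, fun {a b} hab => ?_⟩, hg.injective⟩⟩
  rcases cycleGraph_adj'.mp hab with h | h
  · exact key a b h
  · exact (key b a h).symm

open Fin.NatCast in
lemma mem_range_of_adj (hg : G.IsCycleIn s g) (hmax : ∀ f, ¬ G.IsPathIn s (n + 1) f)
    {j : Fin (n + 1)} {w : V} (hw : w ∈ s) (hadj : G.Adj (g j) w) : w ∈ Set.range g := by
  by_contra hnew
  -- otherwise `w, g j, g (j - 1), …, g (j - n)` is a path with `n + 1` edges
  have hpath : G.IsPathIn s n (fun r => g (j - (r : Fin (n + 1)))) := by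
    refine ⟨fun r _ => hg.mem _, fun r _ => ?_, fun a ha b hb hab => ?_⟩
    · simpa [sub_add] using (hg.adj (j - ((r + 1 : ℕ) : Fin (n + 1)))).symm
    · have h := congrArg Fin.val (sub_right_injective (hg.injective hab))
      rwa [Fin.val_natCast, Fin.val_natCast, Nat.mod_eq_of_lt (by omega),
        Nat.mod_eq_of_lt (by omega)] at h
  exact hmax _ (hpath.cons hw (by simpa using hadj.symm) fun i _ h => hnew ⟨_, h⟩)

end IsCycleIn

lemma IsPathIn.exists_isCycleIn_of_adj {t i : ℕ} {f : ℕ → V} (hf : G.IsPathIn s t f)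
    (hi : i < t) (h0 : G.Adj (f 0) (f (i + 1))) (ht : G.Adj (f t) (f i)) :
    ∃ g : Fin (t + 1) → V, G.IsCycleIn s g := by
  -- Pósa rotation: `f 0, …, f i, f t, f (t - 1), …, f (i + 1)` is a path, closed up by
  -- the edge `f (i + 1) ~ f 0`
  let σ : ℕ → ℕ := fun r => if r ≤ i then r else t + i + 1 - r
  have hσ : ∀ r ≤ t, σ r ≤ t := fun r hr => by simp only [σ]; split_ifs <;> omega
  have hpath : G.IsPathIn s t (f ∘ σ) := by
    refine ⟨fun r hr => hf.mem _ (hσ r hr), fun r hr => ?_, fun a ha b hb hab => ?_⟩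
    · simp only [Function.comp, σ]
      rcases lt_trichotomy r i with hri | rfl | hri
      · rw [if_pos hri.le, if_pos hri.nat_succ_le]
        exact hf.adj r (by omega)
      · rw [if_pos le_rfl, if_neg (by omega), show t + r + 1 - (r + 1) = t by omega]
        exact ht.symm
      · rw [if_neg (by omega), if_neg (by omega), show t + i + 1 - r = t + i - r + 1 by omega,
          show t + i + 1 - (r + 1) = t + i - r by omega]
        exact (hf.adj _ (by omega)).symm
    · have := hf.inj _ (hσ a ha) _ (hσ b hb) hab
      simp only [σ] at this
      split_ifs at this <;> omega
  refine ⟨_, hpath.isCycleIn ?_⟩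
  simpa [σ, if_neg (show ¬ t ≤ i by omega), show t + i + 1 - t = i + 1 by omega] using h0.symm

lemma IsPathIn.cycleGraph_isContained_of_neighborFinset [Fintype V] [DecidableRel G.Adj]
    {v : V} {m : ℕ} {f : ℕ → V} (hf : G.IsPathIn (G.neighborFinset v) m f) :
    cycleGraph (m + 2) ⊑ G := by
  have hadj : ∀ i ≤ m, G.Adj v (f i) := fun i hi => (mem_neighborFinset _ _ _).mp (hf.mem i hi)
  exact ((hf.mono (subset_univ _)).cons (mem_univ v) (hadj 0 m.zero_le)
    fun i hi => (hadj i hi).ne').isCycleIn (hadj m le_rfl).symm |>.cycleGraph_isContained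

lemma exists_isPathIn_forall_not_isPathIn_succ {q : ℕ} (hs : s.Nonempty)
    (hq : ∀ m f, G.IsPathIn s m f → m < q) :
    ∃ t f, G.IsPathIn s t f ∧ ∀ f', ¬ G.IsPathIn s (t + 1) f' := by
  by_contra! hext
  obtain ⟨v, hv⟩ := hs
  have hall : ∀ m, ∃ f, G.IsPathIn s m f := by
    intro m
    induction m with
    | zero => exact ⟨fun _ => v, fun _ _ => hv, nofun, fun i hi j hj _ => by omega⟩
    | succ m ih => obtain ⟨f, hf⟩ := ih; exact hext m f hf
  obtain ⟨f, hf⟩ := hall q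
  exact (hq q f hf).false

namespace IsPathIn

variable {t : ℕ} {f : ℕ → V} {w : V}

lemma exists_eq_of_adj_head (hf : G.IsPathIn s t f) (hmax : ∀ f', ¬ G.IsPathIn s (t + 1) f')
    (hw : w ∈ s) (hadj : G.Adj (f 0) w) : ∃ j ≤ t, f j = w := by
  by_contra! hnew
  exact hmax _ (hf.cons hw hadj.symm hnew)

lemma exists_eq_of_adj_last (hf : G.IsPathIn s t f) (hmax : ∀ f', ¬ G.IsPathIn s (t + 1) f')
    (hw : w ∈ s) (hadj : G.Adj (f t) w) : ∃ j ≤ t, f j = w := by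
  obtain ⟨j, hj, hfj⟩ := hf.reverse.exists_eq_of_adj_head hmax hw (by simpa using hadj)
  exact ⟨t - j, Nat.sub_le t j, hfj⟩

end IsPathIn

lemma IsNClique.exists_eq_insert_insert_singleton [DecidableEq V] {t : Finset V} {u v : V}
    (ht : G.IsNClique 3 t) (hv : v ∈ t) (hu : u ∈ t) (huv : u ≠ v) :
    ∃ w, G.Adj v w ∧ G.Adj u w ∧ t = {v, u, w} := by
  have hu' : u ∈ t.erase v := mem_erase.mpr ⟨huv, hu⟩
  obtain ⟨w, hw⟩ := card_eq_one.mp (show #((t.erase v).erase u) = 1 by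
    rw [card_erase_of_mem hu', card_erase_of_mem hv, ht.card_eq])
  have hw' : w ∈ (t.erase v).erase u := hw ▸ mem_singleton_self w
  simp only [mem_erase] at hw'
  obtain ⟨hwu, hwv, hwt⟩ := hw'
  refine ⟨w, ht.isClique hv hwt hwv.symm, ht.isClique hu hwt hwu.symm, ?_⟩
  rw [← hw, insert_erase hu', insert_erase hv]

variable [DecidableEq V] [DecidableRel G.Adj]

lemma exists_adj_succ_and_adj_of_lt_card_add_card {t : ℕ} {f : ℕ → V}
    (h0 : ∀ w ∈ s, G.Adj (f 0) w → ∃ j ≤ t, f j = w)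
    (ht : ∀ w ∈ s, G.Adj (f t) w → ∃ j ≤ t, f j = w)
    (hdeg : t < #{w ∈ s | G.Adj (f 0) w} + #{w ∈ s | G.Adj (f t) w}) :
    ∃ i < t, G.Adj (f 0) (f (i + 1)) ∧ G.Adj (f t) (f i) := by
  set A := {i ∈ range t | G.Adj (f 0) (f (i + 1))}
  set B := {i ∈ range t | G.Adj (f t) (f i)}
  have hA : #{w ∈ s | G.Adj (f 0) w} ≤ #A := by
    refine (card_le_card fun w hw => ?_).trans (card_image_le (f := fun i => f (i + 1)))
    obtain ⟨hws, hadj⟩ := mem_filter.mp hw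
    obtain ⟨j, hj, rfl⟩ := h0 w hws hadj
    have hj0 : j ≠ 0 := by rintro rfl; exact hadj.ne rfl
    have hj : j - 1 + 1 = j := Nat.sub_add_cancel (Nat.pos_of_ne_zero hj0)
    exact mem_image.mpr ⟨j - 1, by simp [A, hj, hadj]; omega, by simp [hj]⟩
  have hB : #{w ∈ s | G.Adj (f t) w} ≤ #B := by
    refine (card_le_card fun w hw => ?_).trans (card_image_le (f := f))
    obtain ⟨hws, hadj⟩ := mem_filter.mp hw
    obtain ⟨j, hj, rfl⟩ := ht w hws hadj
    have hjt : j ≠ t := by rintro rfl; exact hadj.ne rfl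
    exact mem_image.mpr ⟨j, by simp [B, hadj]; omega, rfl⟩
  obtain ⟨i, hi⟩ := inter_nonempty_of_card_lt_card_add_card (t := A) (u := B)
    (filter_subset _ _) (filter_subset _ _) (by rw [card_range]; omega)
  simp only [A, B, mem_inter, mem_filter, mem_range] at hi
  exact ⟨i, hi.1.1, hi.1.2, hi.2.2⟩

lemma exists_subset_forall_adj_mem {q : ℕ} (hs : s.Nonempty)
    (hmin : ∀ v ∈ s, q ≤ 2 * #{w ∈ s | G.Adj v w})
    (hq : ∀ m f, G.IsPathIn s m f → m < q) :
    ∃ S ⊆ s, S.Nonempty ∧ #S ≤ q ∧ ∀ x ∈ S, ∀ w ∈ s, G.Adj x w → w ∈ S := by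
  obtain ⟨t, f, hf, hmax⟩ := exists_isPathIn_forall_not_isPathIn_succ hs hq
  have htq := hq t f hf
  obtain ⟨i, hi, h0, ht⟩ := exists_adj_succ_and_adj_of_lt_card_add_card
    (fun w hw => hf.exists_eq_of_adj_head hmax hw) (fun w hw => hf.exists_eq_of_adj_last hmax hw)
    (by have := hmin _ (hf.mem 0 (Nat.zero_le t)); have := hmin _ (hf.mem t le_rfl); omega)
  obtain ⟨g, hg⟩ := hf.exists_isCycleIn_of_adj hi h0 ht
  refine ⟨univ.image g, fun x hx => ?_, univ_nonempty.image g, ?_, fun x hx w hw hxw => ?_⟩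
  · obtain ⟨r, -, rfl⟩ := mem_image.mp hx
    exact hg.mem r
  · rw [card_image_of_injective _ hg.injective, card_univ, Fintype.card_fin]
    omega
  · obtain ⟨r, -, rfl⟩ := mem_image.mp hx
    obtain ⟨r', rfl⟩ := hg.mem_range_of_adj hmax hw hxw
    exact mem_image_of_mem g (mem_univ r')

lemma sum_card_filter_adj_eq_sdiff {A : Finset V} (hA : A ⊆ s) :
    ∑ v ∈ s, #{w ∈ s | G.Adj v w} = ∑ v ∈ s \ A, #{w ∈ s \ A | G.Adj v w} +
      ∑ v ∈ s \ A, #{w ∈ A | G.Adj v w} + ∑ v ∈ A, #{w ∈ s | G.Adj v w} := by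
  rw [← sum_sdiff hA, ← sum_add_distrib]
  congr 1
  refine sum_congr rfl fun v _ => ?_
  rw [← card_union_of_disjoint (disjoint_filter_filter sdiff_disjoint), ← filter_union,
    sdiff_union_of_subset hA]

lemma sum_card_filter_adj_le_sdiff_singleton {v : V} (hv : v ∈ s) :
    ∑ u ∈ s, #{w ∈ s | G.Adj u w} ≤
      ∑ u ∈ s \ {v}, #{w ∈ s \ {v} | G.Adj u w} + 2 * #{w ∈ s | G.Adj v w} := by
  have hcross : ∑ u ∈ s \ {v}, #{w ∈ {v} | G.Adj u w} ≤ #{w ∈ s | G.Adj v w} := by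
    simp_rw [filter_singleton, apply_ite card, card_singleton, card_empty, sum_boole]
    exact card_le_card fun u hu => by
      simp only [mem_filter, mem_sdiff] at hu ⊢; exact ⟨hu.1.1, hu.2.symm⟩
  rw [sum_card_filter_adj_eq_sdiff (singleton_subset_iff.mpr hv), sum_singleton]
  omega

lemma sum_card_filter_adj_le_sdiff_of_forall_adj_mem {S : Finset V} (hS : S ⊆ s)
    (hclosed : ∀ x ∈ S, ∀ w ∈ s, G.Adj x w → w ∈ S) :
    ∑ v ∈ s, #{w ∈ s | G.Adj v w} ≤
      ∑ v ∈ s \ S, #{w ∈ s \ S | G.Adj v w} + (#S - 1) * #S := by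
  have hcross : ∑ v ∈ s \ S, #{w ∈ S | G.Adj v w} = 0 :=
    sum_eq_zero fun v hv => card_eq_zero.mpr <| filter_eq_empty_iff.mpr fun w hw hvw =>
      (mem_sdiff.mp hv).2 (hclosed w hw v (mem_sdiff.mp hv).1 hvw.symm)
  have hdeg : ∀ x ∈ S, #{w ∈ s | G.Adj x w} ≤ #S - 1 := fun x hx =>
    (card_le_card fun w hw => mem_erase.mpr ⟨(mem_filter.mp hw).2.ne',
      hclosed x hx w (mem_filter.mp hw).1 (mem_filter.mp hw).2⟩).trans_eq (card_erase_of_mem hx)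
  rw [sum_card_filter_adj_eq_sdiff hS, hcross, add_zero, mul_comm]
  exact Nat.add_le_add_left (sum_le_card_nsmul _ _ _ hdeg) _

theorem sum_card_filter_adj_le_of_isPathIn {q : ℕ} (s : Finset V)
    (hq : ∀ m f, G.IsPathIn s m f → m < q) :
    ∑ v ∈ s, #{w ∈ s | G.Adj v w} ≤ (q - 1) * #s := by
  induction s using strongInduction with
  | H s ih =>
  rcases s.eq_empty_or_nonempty with rfl | hs
  · simp
  obtain ⟨A, hAs, hA, hsum⟩ : ∃ A ⊆ s, A.Nonempty ∧
      ∑ v ∈ s, #{w ∈ s | G.Adj v w} ≤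
        ∑ v ∈ s \ A, #{w ∈ s \ A | G.Adj v w} + (q - 1) * #A := by
    by_cases hlow : ∃ v ∈ s, 2 * #{w ∈ s | G.Adj v w} ≤ q - 1
    · obtain ⟨v, hv, hdeg⟩ := hlow
      refine ⟨{v}, singleton_subset_iff.mpr hv, singleton_nonempty v, ?_⟩
      have := sum_card_filter_adj_le_sdiff_singleton (G := G) hv
      rw [card_singleton]
      omega
    · push Not at hlow
      obtain ⟨S, hSs, hS, hScard, hclosed⟩ :=
        exists_subset_forall_adj_mem hs (fun v hv => by have := hlow v hv; omega) hq
      exact ⟨S, hSs, hS, (sum_card_filter_adj_le_sdiff_of_forall_adj_mem hSs hclosed).trans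
        (by gcongr)⟩
  have hrest := ih (s \ A) (sdiff_ssubset hAs hA) fun m f hf => hq m f (hf.mono sdiff_subset)
  calc ∑ v ∈ s, #{w ∈ s | G.Adj v w} ≤ (q - 1) * #(s \ A) + (q - 1) * #A := by omega
    _ = (q - 1) * #s := by rw [← mul_add, card_sdiff_add_card_eq_card hAs]

section Triangles

variable [Fintype V]

lemma sum_card_filter_mem_cliqueFinset :
    ∑ v, #{t ∈ G.cliqueFinset 3 | v ∈ t} = 3 * #(G.cliqueFinset 3) := by
  calc ∑ v, #{t ∈ G.cliqueFinset 3 | v ∈ t}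
      = ∑ t ∈ G.cliqueFinset 3, #{v ∈ univ | v ∈ t} :=
        sum_card_bipartiteAbove_eq_sum_card_bipartiteBelow _
    _ = ∑ t ∈ G.cliqueFinset 3, 3 := sum_congr rfl fun t ht => by
        rw [filter_mem_eq_inter, univ_inter, (mem_cliqueFinset_iff.mp ht).card_eq]
    _ = 3 * #(G.cliqueFinset 3) := by rw [sum_const, smul_eq_mul, mul_comm]

lemma two_mul_card_filter_mem_cliqueFinset_le (v : V) :
    2 * #{t ∈ G.cliqueFinset 3 | v ∈ t} ≤
      ∑ u ∈ G.neighborFinset v, #{w ∈ G.neighborFinset v | G.Adj u w} := by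
  have hcount :=
    sum_card_bipartiteAbove_eq_sum_card_bipartiteBelow (fun (t : Finset V) u => u ∈ t)
    (s := {t ∈ G.cliqueFinset 3 | v ∈ t}) (t := G.neighborFinset v)
  have hpair : ∀ t ∈ {t ∈ G.cliqueFinset 3 | v ∈ t},
      #((G.neighborFinset v).bipartiteAbove (fun (t : Finset V) u => u ∈ t) t) = 2 := by
    intro t ht
    obtain ⟨htri, hv⟩ := mem_filter.mp ht
    have htri := mem_cliqueFinset_iff.mp htri
    have : (G.neighborFinset v).bipartiteAbove (fun (t : Finset V) u => u ∈ t) t = t.erase v := by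
      ext u
      simp only [bipartiteAbove, mem_filter, mem_neighborFinset, mem_erase]
      exact ⟨fun ⟨hvu, hu⟩ => ⟨hvu.ne', hu⟩,
        fun ⟨huv, hu⟩ => ⟨htri.isClique hv hu huv.symm, hu⟩⟩
    rw [this, card_erase_of_mem hv, htri.card_eq]
  have hthird : ∀ u ∈ G.neighborFinset v,
      #({t ∈ G.cliqueFinset 3 | v ∈ t}.bipartiteBelow (fun (t : Finset V) u => u ∈ t) u) ≤
        #{w ∈ G.neighborFinset v | G.Adj u w} := by
    intro u hu
    have hvu := (mem_neighborFinset _ _ _).mp hu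
    refine (card_le_card fun t ht => ?_).trans (card_image_le (f := fun w => {v, u, w}))
    simp only [bipartiteBelow, mem_filter, mem_cliqueFinset_iff] at ht
    obtain ⟨w, hvw, huw, rfl⟩ := ht.1.1.exists_eq_insert_insert_singleton ht.1.2 ht.2 hvu.ne'
    exact mem_image_of_mem _ (mem_filter.mpr ⟨(mem_neighborFinset _ _ _).mpr hvw, huw⟩)
  calc 2 * #{t ∈ G.cliqueFinset 3 | v ∈ t}
      = ∑ t ∈ {t ∈ G.cliqueFinset 3 | v ∈ t},
          #((G.neighborFinset v).bipartiteAbove (fun (t : Finset V) u => u ∈ t) t) := by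
        rw [sum_congr rfl hpair, sum_const, smul_eq_mul, mul_comm]
    _ ≤ _ := hcount.trans_le (sum_le_sum hthird)

theorem three_mul_card_cliqueFinset_le_of_isPathIn_neighborFinset {q : ℕ}
    (hq : ∀ v m f, G.IsPathIn (G.neighborFinset v) m f → m < q) :
    3 * #(G.cliqueFinset 3) ≤ (q - 1) * #G.edgeFinset := by
  have : 2 * (3 * #(G.cliqueFinset 3)) ≤ 2 * ((q - 1) * #G.edgeFinset) :=
    calc 2 * (3 * #(G.cliqueFinset 3)) = ∑ v, 2 * #{t ∈ G.cliqueFinset 3 | v ∈ t} := by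
          rw [← mul_sum, sum_card_filter_mem_cliqueFinset]
      _ ≤ ∑ v, (q - 1) * G.degree v := sum_le_sum fun v _ =>
          (two_mul_card_filter_mem_cliqueFinset_le v).trans <|
            (sum_card_filter_adj_le_of_isPathIn _ (hq v)).trans_eq
              (by rw [card_neighborFinset_eq_degree])
      _ = 2 * ((q - 1) * #G.edgeFinset) := by
          rw [← mul_sum, sum_degrees_eq_twice_card_edges]; ring
  omega

end Triangles

end SimpleGraph

open SimpleGraph

lemma CycleFree.isPathIn_neighborFinset_length_lt {V : Type*} [Fintype V] {G : SimpleGraph V}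
    [DecidableRel G.Adj] {k : ℕ} (hk : 2 ≤ k) (hG : CycleFree G (2 * k)) {v : V} {m : ℕ}
    {f : ℕ → V} (hf : G.IsPathIn (G.neighborFinset v) m f) : m < 2 * k - 2 := by
  by_contra! hm
  obtain ⟨u, c, hc, hlen⟩ := (cycleGraph_isContained_iff (by omega)).mp
    (hf.of_le hm).cycleGraph_isContained_of_neighborFinset
  exact hG u c hc (by omega)

lemma CycleFree.three_mul_ncard_cliqueSet_le {V : Type*} [Fintype V] {G : SimpleGraph V}
    {k : ℕ} (hk : 2 ≤ k) (hG : CycleFree G (2 * k)) :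
    3 * (G.cliqueSet 3).ncard ≤ (2 * k - 3) * G.edgeSet.ncard := by
  classical
  rw [← coe_cliqueFinset, ← coe_edgeFinset, Set.ncard_coe_finset, Set.ncard_coe_finset,
    show 2 * k - 3 = 2 * k - 2 - 1 by omega]
  exact three_mul_card_cliqueFinset_le_of_isPathIn_neighborFinset fun v m f hf =>
    hG.isPathIn_neighborFinset_length_lt hk hf

lemma CycleFree.bot {V : Type*} (ℓ : ℕ) : CycleFree (⊥ : SimpleGraph V) ℓ :=
  fun _ c hc => (hc.ne_nil (by cases c with | nil => rfl | cons h _ => exact h.elim)).elim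

lemma bddAbove_setOf_exists_eq {α : Type*} [Finite α] (P : α → Prop) (f : α → ℕ) :
    BddAbove {m | ∃ a, P a ∧ f a = m} :=
  ((Set.finite_range f).subset <| by rintro _ ⟨a, -, rfl⟩; exact ⟨a, rfl⟩).bddAbove

/-- `t_{2k}(n) ≤ ((2k-3)/3)·ex(n, C_{2k})` for `k ≥ 2`. -/
theorem stmt11 (n k : ℕ) (hk : 2 ≤ k) :
    3 * triMax n (2 * k) ≤ (2 * k - 3) * exCycle n (2 * k) := by
  obtain ⟨G, hG, hGtri⟩ := Nat.sSup_mem (s := {m | ∃ G : SimpleGraph (Fin n),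
    CycleFree G (2 * k) ∧ (G.cliqueSet 3).ncard = m}) ⟨_, ⊥, CycleFree.bot _, rfl⟩
    (bddAbove_setOf_exists_eq _ _)
  rw [triMax, ← hGtri]
  exact (hG.three_mul_ncard_cliqueSet_le hk).trans <| Nat.mul_le_mul_left _ <|
    le_csSup (bddAbove_setOf_exists_eq _ _) ⟨G, hG, rfl⟩
end

section
/- Every 3-uniform linear hypergraph on n vertices with no Berge cycle of length 2k satisfies: the number of hyperedges is at most ex(n, C_{2k}), the Turán number of the even cycle C_{2k}. -/
open SimpleGraph

lemma support_getElem_eq_getVert {V : Type*} {G : SimpleGraph V} {u v : V}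
    (p : G.Walk u v) : ∀ (i : ℕ) (h : i < p.support.length), p.support[i] = p.getVert i := by
  induction p with
  | nil => intro i h; simp [Walk.support_nil] at h; subst h; rfl
  | cons hadj q ih =>
    intro i h
    cases i with
    | zero => rfl
    | succ i =>
      simp only [Walk.support_cons, List.getElem_cons_succ, Walk.getVert_cons_succ]
      apply ih

lemma cycle_getVert_inj {V : Type*} {G : SimpleGraph V} {u : V} {c : G.Walk u u}
    (hc : c.IsCycle) {i j : ℕ} (hi : i < c.length) (hj : j < c.length)
    (h : c.getVert i = c.getVert j) : i = j := by
  have hnd : c.support.tail.Nodup := hc.support_nodup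
  have hslen : c.support.length = c.length + 1 := c.length_support
  have htlen : c.support.tail.length = c.length := by
    rw [List.length_tail, hslen]; rfl
  have h3 := hc.three_le_length
  have key : ∀ m : ℕ, (hm : m < c.length) → c.support.tail[m]'(by omega) = c.getVert (m+1) := by
    intro m hm
    have : c.support.tail[m]'(by omega) = c.support[m+1]'(by omega) := List.getElem_tail ..
    rw [this, support_getElem_eq_getVert]
  have hlast : c.support.tail[c.length - 1]'(by omega) = u := by
    rw [key (c.length - 1) (by omega)]
    rw [show c.length - 1 + 1 = c.length by omega, Walk.getVert_length]
  rcases Nat.eq_zero_or_pos i with hi0 | hip <;> rcases Nat.eq_zero_or_pos j with hj0 | hjp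
  · omega
  · exfalso
    subst hi0
    rw [c.getVert_zero] at h
    have e1 := key (j-1) (by omega)
    rw [show j - 1 + 1 = j by omega] at e1
    have heq : c.support.tail[j-1]'(by omega) = c.support.tail[c.length-1]'(by omega) := by
      rw [e1, hlast, ← h]
    have := hnd.getElem_inj_iff.mp heq
    omega
  · exfalso
    subst hj0
    rw [c.getVert_zero] at h
    have e1 := key (i-1) (by omega)
    rw [show i - 1 + 1 = i by omega] at e1
    have heq : c.support.tail[i-1]'(by omega) = c.support.tail[c.length-1]'(by omega) := by
      rw [e1, hlast, h]
    have := hnd.getElem_inj_iff.mp heq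
    omega
  · have e1 := key (i-1) (by omega)
    have e2 := key (j-1) (by omega)
    rw [show i - 1 + 1 = i by omega] at e1
    rw [show j - 1 + 1 = j by omega] at e2
    have heq : c.support.tail[i-1]'(by omega) = c.support.tail[j-1]'(by omega) := by
      rw [e1, e2, h]
    have := hnd.getElem_inj_iff.mp heq
    omega

/-- Every 3-uniform linear hypergraph on `n` vertices with no Berge cycle of length `2k`
has at most `ex(n, C_{2k})` hyperedges. -/
theorem stmt18 (n k : ℕ) (H : Finset (Finset (Fin n)))
    (h3 : ∀ E ∈ H, E.card = 3)
    (hlin : ∀ E ∈ H, ∀ E' ∈ H, E ≠ E' → (E ∩ E').card ≤ 1)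
    (hB : ¬ HasBergeCycle H (2 * k)) :
    H.card ≤ exCycle n (2 * k) := by
  classical
  rcases H.eq_empty_or_nonempty with rfl | ⟨E0, hE0⟩
  · simp
  -- Fin n is nonempty
  have : ∃ x, x ∈ E0 := Finset.card_pos.mp (by rw [h3 E0 hE0]; norm_num)
  obtain ⟨x0, -⟩ := this
  -- choose a pair of distinct vertices in each hyperedge
  have hpair : ∀ E : Finset (Fin n), ∃ p : Fin n × Fin n,
      E ∈ H → p.1 ∈ E ∧ p.2 ∈ E ∧ p.1 ≠ p.2 := by
    intro E
    by_cases hE : E ∈ H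
    · obtain ⟨a, ha, b, hb, hab⟩ := Finset.one_lt_card.mp (by rw [h3 E hE]; norm_num)
      exact ⟨(a, b), fun _ => ⟨ha, hb, hab⟩⟩
    · exact ⟨(x0, x0), fun h => absurd h hE⟩
  choose pr hpr using hpair
  set pairE : Finset (Fin n) → Sym2 (Fin n) := fun E => s((pr E).1, (pr E).2) with hpairE
  -- key : pairs determine hyperedges
  have hkey : ∀ E ∈ H, ∀ E' ∈ H, pairE E = pairE E' → E = E' := by
    intro E hE E' hE' hpe
    by_contra hne
    obtain ⟨h1, h2, h12⟩ := hpr E hE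
    obtain ⟨h1', h2', _⟩ := hpr E' hE'
    have hsub : (pr E).1 ∈ E' ∧ (pr E).2 ∈ E' := by
      rcases Sym2.eq_iff.mp hpe with ⟨ha, hb⟩ | ⟨ha, hb⟩
      · exact ⟨ha ▸ h1', hb ▸ h2'⟩
      · exact ⟨ha ▸ h2', hb ▸ h1'⟩
    have : ({(pr E).1, (pr E).2} : Finset (Fin n)) ⊆ E ∩ E' := by
      intro x hx
      simp only [Finset.mem_insert, Finset.mem_singleton] at hx
      rcases hx with rfl | rfl <;> simp [Finset.mem_inter, h1, h2, hsub.1, hsub.2]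
    have hc2 : ({(pr E).1, (pr E).2} : Finset (Fin n)).card = 2 :=
      Finset.card_pair h12
    have := Finset.card_le_card this
    have := hlin E hE E' hE' hne
    omega
  set S : Set (Sym2 (Fin n)) := ↑(H.image pairE) with hS
  set G : SimpleGraph (Fin n) := SimpleGraph.fromEdgeSet S with hG
  -- edge set of G
  have hedge : G.edgeSet = S := by
    rw [hG, edgeSet_fromEdgeSet]
    ext e
    simp only [Set.mem_diff, Set.mem_setOf_eq, and_iff_left_iff_imp]
    intro he
    rw [hS] at he
    simp only [Finset.coe_image, Set.mem_image, Finset.mem_coe] at he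
    obtain ⟨E, hE, rfl⟩ := he
    rw [hpairE]
    simp only [Sym2.isDiag_iff_proj_eq]
    exact (hpr E hE).2.2
  have hcard : G.edgeSet.ncard = H.card := by
    rw [hedge, hS, Set.ncard_coe_finset]
    exact Finset.card_image_of_injOn fun E hE E' hE' h =>
      hkey E (by simpa using hE) E' (by simpa using hE') h
  -- G is 2k-cycle-free
  have hCF : CycleFree G (2 * k) := by
    intro v c hc hlen
    apply hB
    have h3l := hc.three_le_length
    have hpos : 0 < 2 * k := by omega
    -- vertices of the Berge cycle
    set w : Fin (2 * k) → Fin n := fun i => c.getVert i with hw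
    have hadj : ∀ i : Fin (2 * k), G.Adj (c.getVert i) (c.getVert (i + 1 : ℕ)) := by
      intro i
      exact c.adj_getVert_succ (by rw [hlen]; exact i.2)
    have hEex : ∀ i : Fin (2 * k), ∃ E, E ∈ H ∧
        pairE E = s(c.getVert i, c.getVert (i + 1 : ℕ)) := by
      intro i
      have this : s(c.getVert (i : ℕ), c.getVert ((i : ℕ) + 1)) ∈ G.edgeSet :=
        (G.mem_edgeSet).mpr (hadj i)
      rw [hedge, hS] at this
      simp only [Finset.coe_image, Set.mem_image, Finset.mem_coe] at this
      obtain ⟨E, hE, hEe⟩ := this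
      exact ⟨E, hE, hEe⟩
    choose fE hfE1 hfE2 using hEex
    -- membership facts
    have hmem : ∀ i : Fin (2 * k),
        c.getVert i ∈ fE i ∧ c.getVert (i + 1 : ℕ) ∈ fE i := by
      intro i
      obtain ⟨ha, hb, -⟩ := hpr (fE i) (hfE1 i)
      rcases Sym2.eq_iff.mp (hfE2 i) with ⟨h1, h2⟩ | ⟨h1, h2⟩
      · exact ⟨h1 ▸ ha, h2 ▸ hb⟩
      · exact ⟨h2 ▸ hb, h1 ▸ ha⟩
    -- getVert wrap-around
    have hwrap : ∀ i : Fin (2 * k), c.getVert ((i + 1 : ℕ) % (2 * k)) = c.getVert (i + 1 : ℕ) := by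
      intro i
      rcases Nat.lt_or_ge (i + 1 : ℕ) (2 * k) with hlt | hge
      · rw [Nat.mod_eq_of_lt hlt]
      · have : (i + 1 : ℕ) = 2 * k := by have := i.2; omega
        rw [this, Nat.mod_self, c.getVert_zero, ← hlen, c.getVert_length]
    -- injectivity of w
    have hwinj : Function.Injective w := by
      intro i j hij
      have := cycle_getVert_inj hc (by rw [hlen]; exact i.2) (by rw [hlen]; exact j.2) hij
      exact Fin.ext this
    -- injectivity of fE
    have hfinj : Function.Injective fE := by
      intro i j hij
      by_contra hne
      have heq : s(c.getVert (i : ℕ), c.getVert ((i : ℕ) + 1)) =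
          s(c.getVert (j : ℕ), c.getVert ((j : ℕ) + 1)) := by
        rw [← hfE2 i, ← hfE2 j, hij]
      have h1 : (w i : Fin n) = c.getVert (i : ℕ) := rfl
      rcases Sym2.eq_iff.mp heq with ⟨ha, hb⟩ | ⟨ha, hb⟩
      · exact hne (hwinj (by exact ha))
      · -- c.getVert i = c.getVert (j+1), c.getVert (i+1) = c.getVert j
        have e1 : (i : ℕ) = ((j : ℕ) + 1) % (2 * k) := by
          have : c.getVert (i : ℕ) = c.getVert (((j : ℕ) + 1) % (2 * k)) := by
            rw [hwrap j]; exact ha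
          exact cycle_getVert_inj hc (by rw [hlen]; exact i.2)
            (by rw [hlen]; exact Nat.mod_lt _ hpos) this
        have e2 : (j : ℕ) = ((i : ℕ) + 1) % (2 * k) := by
          have : c.getVert (j : ℕ) = c.getVert (((i : ℕ) + 1) % (2 * k)) := by
            rw [hwrap i]; exact hb.symm
          exact cycle_getVert_inj hc (by rw [hlen]; exact j.2)
            (by rw [hlen]; exact Nat.mod_lt _ hpos) this
        have hi2 := i.2
        have hj2 := j.2
        have hk3 : 3 ≤ 2 * k := hlen ▸ h3l
        by_cases hj1 : (j : ℕ) + 1 < 2 * k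
        · rw [Nat.mod_eq_of_lt hj1] at e1
          by_cases hi1 : (i : ℕ) + 1 < 2 * k
          · rw [Nat.mod_eq_of_lt hi1] at e2; omega
          · have hieq : (i : ℕ) + 1 = 2 * k := by omega
            rw [hieq, Nat.mod_self] at e2
            omega
        · have hjeq : (j : ℕ) + 1 = 2 * k := by omega
          rw [hjeq, Nat.mod_self] at e1
          rw [e1, Nat.mod_eq_of_lt (by omega)] at e2
          omega
    refine ⟨fE, w, hfinj, hwinj, hfE1, fun i => ⟨(hmem i).1, ?_⟩⟩
    show c.getVert (((i : ℕ) + 1) % (2 * k)) ∈ fE i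
    rw [hwrap i]
    exact (hmem i).2
  -- conclude
  have hmemset : H.card ∈ {m | ∃ G : SimpleGraph (Fin n), CycleFree G (2 * k) ∧ G.edgeSet.ncard = m} :=
    ⟨G, hCF, hcard⟩
  refine le_csSup ⟨Nat.card (Sym2 (Fin n)), ?_⟩ hmemset
  rintro m ⟨G', -, rfl⟩
  have : G'.edgeSet.ncard ≤ (Set.univ : Set (Sym2 (Fin n))).ncard :=
    Set.ncard_le_ncard (Set.subset_univ _) Set.finite_univ
  rwa [Set.ncard_univ] at this
end
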